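/- Let p be an atom and M = (W,R,V) a model with W and R disjoint. Let M' = (W',R',V') be the model where W' = W ∪ R; for t,u ∈ W, tR'u iff tRu; for t ∈ W and (u,v) ∈ R, tR'(u,v) iff t = u; for (t,u) ∈ R and v ∈ W, (t,u)R'v iff u = v; for (t,u),(v,w) ∈ R, (t,u)R'(v,w) iff t = v and u = w; V'(q) = V(q) for every atom q ≠ p; and V'(p) = W. Then for every formula ψ in which p does not occur and every t ∈ W: M,t ⊨ ψ if and only if M',t ⊨ τ_p(ψ). -/

import Mathlib

/-- Formulas of unimodal modal logic. -/
inductive Formula : Type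
  | atom : ℕ → Formula
  | falsum : Formula
  | neg : Formula → Formula
  | and : Formula → Formula → Formula
  | box : Formula → Formula
deriving DecidableEq

/-- Material implication, as the usual classical abbreviation. -/
def Formula.imp (φ ψ : Formula) : Formula := .neg (.and φ (.neg ψ))

/-- Satisfaction of a formula at a world of a model `(W, R, V)`. -/
def Sat {W : Type} (R : W → W → Prop) (V : ℕ → Set W) : W → Formula → Prop
  | w, .atom p => w ∈ V p
  | _, .falsum => False
  | w, .neg φ => ¬ Sat R V w φ
  | w, .and φ ψ => Sat R V w φ ∧ Sat R V w ψ
  | w, .box φ => ∀ v, R w v → Sat R V v φ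

/-- The atom `p` occurs in the formula. -/
def Occurs (p : ℕ) : Formula → Prop
  | .atom q => p = q
  | .falsum => False
  | .neg φ => Occurs p φ
  | .and φ ψ => Occurs p φ ∨ Occurs p ψ
  | .box φ => Occurs p φ

/-- The translation `τ_p`:  atoms, `⊥` are unchanged, it commutes with the Boolean
connectives, and `τ_p(□φ) = □(p → τ_p(φ))`. -/
def tau (p : ℕ) : Formula → Formula
  | .atom q => .atom q
  | .falsum => .falsum
  | .neg φ => .neg (tau p φ)
  | .and φ ψ => .and (tau p φ) (tau p ψ)
  | .box φ => .box (.imp (.atom p) (tau p φ))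

/-- The new set of worlds: the (disjoint) union `W ∪ R` of the set of worlds `W`
and the set `R` of `R`-edges. -/
def ExtWorld (W : Type) (R : W → W → Prop) : Type := W ⊕ {q : W × W // R q.1 q.2}

/-- The relation `R'` on `W ∪ R`: for `t,u ∈ W`, `tR'u` iff `tRu`; for `t ∈ W` and
`(u,v) ∈ R`, `tR'(u,v)` iff `t = u`; for `(t,u) ∈ R` and `v ∈ W`, `(t,u)R'v` iff
`u = v`; for `(t,u),(v,w) ∈ R`, `(t,u)R'(v,w)` iff `t = v` and `u = w`. -/
def ExtRel {W : Type} (R : W → W → Prop) : ExtWorld W R → ExtWorld W R → Prop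
  | .inl t, .inl u => R t u
  | .inl t, .inr q => t = q.1.1
  | .inr q, .inl v => q.1.2 = v
  | .inr q, .inr q' => q.1.1 = q'.1.1 ∧ q.1.2 = q'.1.2

theorem Sat.imp_iff {W : Type} {R : W → W → Prop} {V : ℕ → Set W} {w : W} {φ ψ : Formula} :
    Sat R V w (φ.imp ψ) ↔ (Sat R V w φ → Sat R V w ψ) := by
  simp only [Formula.imp, Sat, not_and, not_not]

/-- The only new `R'`-successors of an old world are edge worlds, where `p` fails, so the guard
`p →` discards them. -/
theorem sat_box_imp_inl_iff {W : Type} {R : W → W → Prop} {V' : ℕ → Set (ExtWorld W R)} {p : ℕ}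
    (hVp : V' p = Set.range Sum.inl) (φ : Formula) (t : W) :
    Sat (ExtRel R) V' (.inl t) (.box ((Formula.atom p).imp φ)) ↔
      ∀ u, R t u → Sat (ExtRel R) V' (.inl u) φ := by
  simp only [Sat]
  constructor
  · intro hbox u htu
    exact Sat.imp_iff.mp (hbox (.inl u) htu) (show Sum.inl u ∈ V' p from hVp ▸ Set.mem_range_self u)
  · rintro hsucc (u | e) hte
    · exact Sat.imp_iff.mpr fun _ => hsucc u hte
    · refine Sat.imp_iff.mpr fun (hp : Sum.inr e ∈ V' p) => ?_
      rw [hVp] at hp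
      obtain ⟨_, hinl⟩ := hp
      cases hinl

theorem stmt4_general {W : Type} (R : W → W → Prop) (V : ℕ → Set W) (p : ℕ)
    (V' : ℕ → Set (ExtWorld W R))
    (hV' : ∀ q, q ≠ p → V' q = Sum.inl '' V q)
    (hVp : V' p = Set.range (Sum.inl : W → ExtWorld W R))
    (ψ : Formula) (h : ¬ Occurs p ψ) (t : W) :
    Sat R V t ψ ↔ Sat (ExtRel R) V' (Sum.inl t) (tau p ψ) := by
  induction ψ generalizing t with
  | atom q =>
    have hqp : q ≠ p := fun hq => h hq.symm
    show t ∈ V q ↔ Sum.inl t ∈ V' q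
    rw [hV' q hqp]
    exact Sum.inl_injective.mem_set_image.symm
  | falsum => rfl
  | neg φ ih => exact not_congr (ih h t)
  | and φ χ ih₁ ih₂ =>
    obtain ⟨h₁, h₂⟩ := not_or.mp h
    exact and_congr (ih₁ h₁ t) (ih₂ h₂ t)
  | box φ ih =>
    rw [tau, sat_box_imp_inl_iff hVp]
    exact forall₂_congr fun u _ => ih h u

/-- Let `M' = (W ∪ R, R', V')` where `V'(q) = V(q)` for `q ≠ p` and `V'(p) = W`.
If `p` does not occur in `ψ`, then `M, t ⊨ ψ` iff `M', t ⊨ τ_p(ψ)` for every `t ∈ W`. -/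
theorem stmt4 {W : Type} [Nonempty W] (R : W → W → Prop) (V : ℕ → Set W) (p : ℕ)
    (V' : ℕ → Set (ExtWorld W R))
    (hV' : ∀ q, q ≠ p → V' q = Sum.inl '' V q)
    (hVp : V' p = Set.range (Sum.inl : W → ExtWorld W R))
    (ψ : Formula) (h : ¬ Occurs p ψ) (t : W) :
    Sat R V t ψ ↔ Sat (ExtRel R) V' (Sum.inl t) (tau p ψ) :=
  stmt4_general R V p V' hV' hVp ψ h t
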